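/- For all integers r ≥ 0 and 0 ≤ i ≤ r, let P(r,i) be the set of pairs (Z, f) where Z is a multiset of size r − i with elements in {1,…,r} and f is a function from {1,…,i} to {1,…,r}, such that for every k ∈ {1,…,r} one has (number of elements of Z that are ≤ k, counted with multiplicity) + #{ j ∈ {1,…,i} : f(j) ≤ k } ≥ k. Then (r+1) · |P(r,i)| = (r+1)^i · binom(2r − i, r); in particular, for i ≥ 1, |P(r,i)| = (r+1)^{i−1} · binom(2r − i, r). -/

import Mathlib

/-- `parkPairs r i` is the number of parking preference pairs `(Z, f)` where `Z` is a
multiset of size `r - i` with elements in `{1,…,r}` (motorcycle preferences) and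
`f : {1,…,i} → {1,…,r}` (car preferences), such that for every `k ∈ {1,…,r}`, the number
of elements of `Z` that are `≤ k` plus the number of `j` with `f j ≤ k` is at least `k`. -/
noncomputable def parkPairs (r i : ℕ) : ℕ :=
  Nat.card {p : Multiset ℕ × (Fin i → ℕ) //
    Multiset.card p.1 = r - i ∧ (∀ z ∈ p.1, 1 ≤ z ∧ z ≤ r) ∧
    (∀ j, 1 ≤ p.2 j ∧ p.2 j ≤ r) ∧
    (∀ k : ℕ, 1 ≤ k → k ≤ r →
      k ≤ Multiset.card (p.1.filter (fun z => z ≤ k)) +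
          (Finset.univ.filter (fun j => p.2 j ≤ k)).card)}

/-!
Pollak's circular argument. Shift all preferences down by one and let them range over a
circular street of `r + 1` spots `Fin (r + 1)`; there are `C(2r - i, r) (r + 1)^i` such
configurations. Rotations act on them, and exactly one rotation of each configuration parks on
the spots `0, …, r - 1`: rotating by `a` parks iff `a` is the first minimum, over one period, of
the walk `t ↦ #{preferences < t} - t`, which drops by one per period because there are `r`
preferences for `r + 1` spots. Hence `(r + 1) |P(r, i)| = C(2r - i, r) (r + 1)^i`.
-/

open Finset
open Fin.NatCast

namespace ParkingTriangle

section CycleLemma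

variable {n : ℕ}

lemma exists_le_forall_le_add_of_add_period (W : ℕ → ℤ) (hW : ∀ t, W (t + (n + 1)) = W t - 1) :
    ∃ b ≤ n, ∀ k ≤ n, W b ≤ W (b + k) := by
  have hmin : ∃ b, b ≤ n ∧ ∀ t ≤ n, W b ≤ W t := by
    obtain ⟨b, hb, hbmin⟩ := (range (n + 1)).exists_min_image W ⟨0, by simp⟩
    exact ⟨b, Nat.lt_succ_iff.mp (mem_range.mp hb),
      fun t ht => hbmin t (mem_range.mpr (Nat.lt_succ_of_le ht))⟩
  classical
  set b := Nat.find hmin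
  obtain ⟨hbn, hbmin⟩ := Nat.find_spec hmin
  refine ⟨b, hbn, fun k hk => ?_⟩
  rcases le_or_gt (b + k) n with hwrap | hwrap
  · exact hbmin _ hwrap
  -- `b` is the first minimum, so `W b < W s` for the earlier point `s` with `W (b + k) = W s - 1`
  set s := b + k - (n + 1)
  have hs : W b < W s := by
    have hnot := Nat.find_min hmin (show s < b by omega)
    push Not at hnot
    obtain ⟨t, ht, hlt⟩ := hnot (by omega)
    exact (hbmin t ht).trans_lt hlt
  have := hW s
  rw [show s + (n + 1) = b + k by omega] at this
  omega

lemma eq_of_forall_le_add_of_add_period {W : ℕ → ℤ} (hW : ∀ t, W (t + (n + 1)) = W t - 1)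
    {b b' : ℕ} (hb : b ≤ n) (hb' : b' ≤ n) (h : ∀ k ≤ n, W b ≤ W (b + k))
    (h' : ∀ k ≤ n, W b' ≤ W (b' + k)) : b = b' := by
  by_contra hne
  wlog hlt : b < b' generalizing b b'
  · exact this hb' hb h' h (Ne.symm hne) (by omega)
  have h1 := h (b' - b) (by omega)
  have h2 := h' (b + (n + 1) - b') (by omega)
  rw [Nat.add_sub_cancel' hlt.le] at h1
  rw [show b' + (b + (n + 1) - b') = b + (n + 1) by omega, hW] at h2
  omega

def IsParking (c : Fin (n + 1) → ℕ) : Prop := ∀ k ≤ n, k ≤ ∑ t ∈ range k, c t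

def walk (c : Fin (n + 1) → ℕ) (t : ℕ) : ℤ := ∑ j ∈ range t, (c j : ℤ) - t

variable (c : Fin (n + 1) → ℕ)

lemma walk_add (a k : ℕ) :
    walk c (a + k) = walk c a + ∑ t ∈ range k, (c (a + t) : ℤ) - k := by
  simp only [walk, sum_range_add, Nat.cast_add]
  ring

lemma sum_range_rotate (a : Fin (n + 1)) : ∑ t ∈ range (n + 1), c (a + t) = ∑ v, c v := by
  rw [← Fin.sum_univ_eq_sum_range (fun t => c (a + t))]
  simpa using Equiv.sum_comp (Equiv.addLeft a) c

lemma walk_add_period (hc : ∑ v, c v = n) (t : ℕ) : walk c (t + (n + 1)) = walk c t - 1 := by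
  rw [walk_add, ← Nat.cast_sum, sum_range_rotate c t, hc]
  push_cast
  ring

lemma isParking_rotate_iff (a : Fin (n + 1)) :
    IsParking (fun v => c (a + v)) ↔ ∀ k ≤ n, walk c a ≤ walk c (a + k) := by
  refine forall₂_congr fun k _ => ?_
  rw [walk_add, add_sub_assoc, le_add_iff_nonneg_right, sub_nonneg, ← Nat.cast_sum, Nat.cast_le]
  simp only [Fin.cast_val_eq_self]

theorem existsUnique_isParking_rotate (hc : ∑ v, c v = n) :
    ∃! a : Fin (n + 1), IsParking (fun v => c (a + v)) := by
  simp only [isParking_rotate_iff]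
  have hW := walk_add_period c hc
  obtain ⟨b, hb, hgood⟩ := exists_le_forall_le_add_of_add_period (walk c) hW
  refine ⟨⟨b, Nat.lt_succ_of_le hb⟩, hgood, fun a ha => Fin.ext ?_⟩
  exact eq_of_forall_le_add_of_add_period hW (Nat.lt_succ_iff.mp a.isLt) hb ha hgood

end CycleLemma

section Configurations

variable {r i : ℕ}

/-- Spot `v : Fin (r + 1)` stands for the paper's spot `v + 1`; spot `r` is the extra spot that
closes the street into a circle. -/
abbrev Config (r i : ℕ) := Sym (Fin (r + 1)) (r - i) × (Fin i → Fin (r + 1))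

def occupancy (q : Config r i) : Multiset (Fin (r + 1)) := q.1 + univ.val.map q.2

lemma card_occupancy (hi : i ≤ r) (q : Config r i) : Multiset.card (occupancy q) = r := by
  simp [occupancy, hi]

def shift (a : Fin (r + 1)) (q : Config r i) : Config r i := (q.1.map (· + a), fun j => q.2 j + a)

lemma shift_neg_shift (a : Fin (r + 1)) (q : Config r i) : shift (-a) (shift a q) = q := by
  ext <;> simp [shift]

lemma shift_shift_neg (a : Fin (r + 1)) (q : Config r i) : shift a (shift (-a) q) = q := by
  simpa using shift_neg_shift (-a) q

lemma occupancy_shift (a : Fin (r + 1)) (q : Config r i) :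
    occupancy (shift a q) = (occupancy q).map (· + a) := by
  simp [occupancy, shift, Multiset.map_add, Function.comp_def]

def Parks (q : Config r i) : Prop := IsParking fun v => (occupancy q).count v

lemma parks_shift_neg_iff (a : Fin (r + 1)) (q : Config r i) :
    Parks (shift (-a) q) ↔ IsParking fun v => (occupancy q).count (a + v) := by
  have hcount (v : Fin (r + 1)) :
      ((occupancy q).map (· + -a)).count v = (occupancy q).count (a + v) := by
    rw [show v = a + v + -a by abel, Multiset.count_map_eq_count' _ _ (add_left_injective _)]
    simp
  simp only [Parks, occupancy_shift, hcount]

def Park (r i : ℕ) := {q : Config r i // Parks q}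

lemma shift_park_bijective (hi : i ≤ r) :
    Function.Bijective fun x : Fin (r + 1) × Park r i => shift x.1 x.2.1 := by
  have hstart (q : Config r i) := existsUnique_isParking_rotate (fun v => (occupancy q).count v)
    (by simp [card_occupancy hi])
  constructor
  · rintro ⟨a, p⟩ ⟨a', p'⟩ h
    simp only at h
    have ha : a = a' := by
      refine (hstart (shift a p.1)).unique ?_ ?_
      · rw [← parks_shift_neg_iff, shift_neg_shift]; exact p.2
      · rw [← parks_shift_neg_iff, h, shift_neg_shift]; exact p'.2
    subst ha
    have := congrArg (shift (-a)) h
    rw [shift_neg_shift, shift_neg_shift] at this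
    simp [Subtype.ext this]
  · intro q
    obtain ⟨a, ha, -⟩ := hstart q
    exact ⟨(a, ⟨shift (-a) q, (parks_shift_neg_iff a q).mpr ha⟩), shift_shift_neg a q⟩

lemma card_config (hi : i ≤ r) : Nat.card (Config r i) = (2 * r - i).choose r * (r + 1) ^ i := by
  rw [Nat.card_eq_fintype_card, Fintype.card_prod, Sym.card_sym_eq_choose]
  simp only [Fintype.card_fin, Fintype.card_fun]
  rw [show r + 1 + (r - i) - 1 = 2 * r - i by omega,
    Nat.choose_symm_of_eq_add (show 2 * r - i = r - i + r by omega)]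

lemma card_mul_card_park (hi : i ≤ r) : (r + 1) * Nat.card (Park r i) = Nat.card (Config r i) := by
  rw [← Nat.card_eq_of_bijective _ (shift_park_bijective hi), Nat.card_prod, Nat.card_fin]

end Configurations

section PreferencePairs

variable {n r i : ℕ}

lemma card_filter_lt_eq_sum_count (m : Multiset ℕ) (k : ℕ) :
    Multiset.card (m.filter (· < k)) = ∑ t ∈ range k, m.count t := by
  rw [← Multiset.sum_count_eq_card (s := range k) fun t ht =>
    mem_range.mpr (Multiset.mem_filter.mp ht).2]
  exact sum_congr rfl fun t ht => Multiset.count_filter_of_pos (mem_range.mp ht)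

lemma card_filter_val_lt_eq_sum_count (s : Multiset (Fin (n + 1))) {k : ℕ} (hk : k ≤ n + 1) :
    Multiset.card (s.filter fun v => v.val < k) = ∑ t ∈ range k, s.count (t : Fin (n + 1)) := by
  calc Multiset.card (s.filter fun v => v.val < k)
      = Multiset.card ((s.map Fin.val).filter (· < k)) := by
        rw [Multiset.filter_map, Multiset.card_map]; rfl
    _ = ∑ t ∈ range k, (s.map Fin.val).count t := card_filter_lt_eq_sum_count _ k
    _ = ∑ t ∈ range k, s.count (t : Fin (n + 1)) := sum_congr rfl fun t ht => ?_
  have htn : t < n + 1 := by rw [mem_range] at ht; omega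
  conv_lhs => rw [← Fin.val_cast_of_lt htn]
  rw [Multiset.count_map_eq_count' _ _ Fin.val_injective]

lemma val_lt_of_isParking {s : Multiset (Fin (n + 1))} (hs : Multiset.card s = n)
    (h : IsParking fun v => s.count v) : ∀ v ∈ s, v.val < n := by
  have hfull : Multiset.card (s.filter fun v => v.val < n) = Multiset.card s := by
    refine le_antisymm (Multiset.card_le_card (Multiset.filter_le _ _)) ?_
    rw [card_filter_val_lt_eq_sum_count s n.le_succ, hs]
    exact h n le_rfl
  rwa [← Multiset.countP_eq_card_filter, Multiset.countP_eq_card] at hfull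

def IsPrefPair (r i : ℕ) (p : Multiset ℕ × (Fin i → ℕ)) : Prop :=
  Multiset.card p.1 = r - i ∧ (∀ z ∈ p.1, 1 ≤ z ∧ z ≤ r) ∧
    (∀ j, 1 ≤ p.2 j ∧ p.2 j ≤ r) ∧
    (∀ k : ℕ, 1 ≤ k → k ≤ r →
      k ≤ Multiset.card (p.1.filter (fun z => z ≤ k)) +
          (Finset.univ.filter (fun j => p.2 j ≤ k)).card)

def toPrefs (q : Config r i) : Multiset ℕ × (Fin i → ℕ) :=
  (q.1.1.map fun v => v.val + 1, fun j => (q.2 j).val + 1)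

lemma card_filter_toPrefs (q : Config r i) (k : ℕ) :
    Multiset.card ((toPrefs q).1.filter (fun z => z ≤ k)) +
        (Finset.univ.filter (fun j => (toPrefs q).2 j ≤ k)).card =
      Multiset.card ((occupancy q).filter fun v => v.val < k) := by
  simp only [toPrefs, occupancy, Multiset.filter_add, Multiset.card_add, Multiset.filter_map,
    Multiset.card_map, Finset.card_def, Finset.filter_val, Function.comp_def, Nat.add_one_le_iff]
  rfl

lemma parks_iff (q : Config r i) :
    Parks q ↔ ∀ k : ℕ, 1 ≤ k → k ≤ r →
      k ≤ Multiset.card ((toPrefs q).1.filter (fun z => z ≤ k)) +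
          (Finset.univ.filter (fun j => (toPrefs q).2 j ≤ k)).card := by
  refine forall_congr' fun k => ⟨fun h _ hk => ?_, fun h hk => ?_⟩
  · rw [card_filter_toPrefs, card_filter_val_lt_eq_sum_count _ (by omega)]
    exact h hk
  · rcases Nat.eq_zero_or_pos k with rfl | hk0
    · exact Nat.zero_le _
    · rw [← card_filter_val_lt_eq_sum_count _ (by omega), ← card_filter_toPrefs]
      exact h hk0 hk

lemma toPrefs_isPrefPair (hi : i ≤ r) {q : Config r i} (hq : Parks q) :
    IsPrefPair r i (toPrefs q) := by
  have hlt := val_lt_of_isParking (card_occupancy hi q) hq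
  refine ⟨by simp [toPrefs], ?_, fun j => ?_, (parks_iff q).mp hq⟩
  · simp only [toPrefs, Multiset.mem_map]
    rintro _ ⟨v, hv, rfl⟩
    have := hlt v (Multiset.mem_add.mpr (Or.inl hv))
    omega
  · have := hlt (q.2 j) (Multiset.mem_add.mpr (Or.inr (Multiset.mem_map_of_mem _ (mem_univ j))))
    simp only [toPrefs]
    omega

lemma toPrefs_injective : Function.Injective (toPrefs (r := r) (i := i)) := by
  have hsucc : Function.Injective fun v : Fin (r + 1) => v.val + 1 :=
    fun v w h => Fin.ext (Nat.succ_injective h)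
  intro q q' h
  simp only [toPrefs, Prod.mk.injEq] at h
  ext1
  · exact Sym.coe_injective (Multiset.map_injective hsucc h.1)
  · exact funext fun j => hsucc (congrFun h.2 j)

lemma exists_toPrefs_eq {p : Multiset ℕ × (Fin i → ℕ)} (hp : IsPrefPair r i p) :
    ∃ q : Config r i, toPrefs q = p := by
  obtain ⟨hcard, hZ, hf, -⟩ := hp
  have hpred {z : ℕ} (h : 1 ≤ z ∧ z ≤ r) : (((z - 1 : ℕ) : Fin (r + 1)) : ℕ) + 1 = z := by
    rw [Fin.val_cast_of_lt (by omega)]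
    omega
  refine ⟨(⟨p.1.map fun z => ((z - 1 : ℕ) : Fin (r + 1)), by simp [hcard]⟩,
    fun j => ((p.2 j - 1 : ℕ) : Fin (r + 1))), ?_⟩
  ext1
  · simp only [toPrefs, Multiset.map_map, Function.comp_def]
    conv_rhs => rw [← Multiset.map_id p.1]
    exact Multiset.map_congr rfl fun z hz => hpred (hZ z hz)
  · exact funext fun j => hpred (hf j)

lemma parkPairs_eq_card_park (hi : i ≤ r) : parkPairs r i = Nat.card (Park r i) := by
  refine (Nat.card_eq_of_bijective (fun q : Park r i =>
    (⟨toPrefs q.1, toPrefs_isPrefPair hi q.2⟩ : {p // IsPrefPair r i p})) ⟨?_, ?_⟩).symm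
  · exact fun q q' h => Subtype.ext (toPrefs_injective (congrArg Subtype.val h))
  · rintro ⟨p, hp⟩
    obtain ⟨q, rfl⟩ := exists_toPrefs_eq hp
    exact ⟨⟨q, (parks_iff q).mpr hp.2.2.2⟩, rfl⟩

end PreferencePairs

end ParkingTriangle

open ParkingTriangle

theorem stmt4 (r i : ℕ) (hi : i ≤ r) :
    (r + 1) * parkPairs r i = (r + 1) ^ i * Nat.choose (2 * r - i) r ∧
    (1 ≤ i → parkPairs r i = (r + 1) ^ (i - 1) * Nat.choose (2 * r - i) r) := by
  have hmain : (r + 1) * parkPairs r i = (r + 1) ^ i * Nat.choose (2 * r - i) r := by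
    rw [parkPairs_eq_card_park hi, card_mul_card_park hi, card_config hi, mul_comm]
  refine ⟨hmain, fun hi1 => Nat.eq_of_mul_eq_mul_left (Nat.succ_pos r) ?_⟩
  rw [hmain, ← mul_assoc, ← pow_succ', Nat.sub_add_cancel hi1]
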